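/- arXiv:2603.04883 — 4 statements merged into one kernel-verified Lean document; each statement's English description precedes it below -/
import Mathlib

section
/- Let R(L) be the repetition code over F_2 with coboundary δ, and let π: F_2^L → F_2^w be the projection onto the first w coordinates (1 ≤ w ≤ L). Then for every s ∈ F_2^L, |δ s| ≥ (1/(L·w)) · (|π s| · |s̄| + |s| · |π s̄|), i.e., the repetition code is (1/L)-coexpanding relative to π. -/
/-! If `δ s ≠ 0` then `|δ s| ≥ 1`, while the cross count `|π s|·|s̄| + |s|·|π s̄|` never exceeds
`(|π s| + |π s̄|)(|s| + |s̄|) ≤ w L`. If `δ s = 0` then `s` is constant, and one factor of each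
product vanishes. -/

/-- Hamming weight of a vector over `F_2`. -/
def hamWt {n : ℕ} (v : Fin n → ZMod 2) : ℕ :=
  (Finset.univ.filter (fun k => v k ≠ 0)).card

/-- Number of zero coordinates (weight of the complement subset). -/
def zeroWt {n : ℕ} (v : Fin n → ZMod 2) : ℕ :=
  (Finset.univ.filter (fun k => v k = 0)).card

/-- Weight of the projection onto the first `w` coordinates. -/
def projWt {n : ℕ} (w : ℕ) (v : Fin n → ZMod 2) : ℕ :=
  (Finset.univ.filter (fun k : Fin n => (k : ℕ) < w ∧ v k ≠ 0)).card

/-- Number of zero coordinates among the first `w` coordinates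
(the weight of `π s̄`). -/
def projZeroWt {n : ℕ} (w : ℕ) (v : Fin n → ZMod 2) : ℕ :=
  (Finset.univ.filter (fun k : Fin n => (k : ℕ) < w ∧ v k = 0)).card

/-- Coboundary of the repetition code `R(L)`: `(δ s)_i = s_i + s_{i+1}`. -/
def coBd (L : ℕ) (s : Fin L → ZMod 2) : Fin (L - 1) → ZMod 2 :=
  fun i => s ⟨i.1, by have := i.2; omega⟩ + s ⟨i.1 + 1, by have := i.2; omega⟩

open Finset

section Weights

variable {n : ℕ} (w : ℕ) (v : Fin n → ZMod 2)

theorem hamWt_add_zeroWt : hamWt v + zeroWt v = n := by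
  rw [hamWt, zeroWt, add_comm, card_filter_add_card_filter_not, card_univ, Fintype.card_fin]

theorem projWt_add_projZeroWt_le : projWt w v + projZeroWt w v ≤ w := by
  have hsplit :=
    card_filter_add_card_filter_not (s := univ.filter fun k : Fin n => (k : ℕ) < w) (v · = 0)
  simp only [filter_filter] at hsplit
  rw [projWt, projZeroWt, add_comm, hsplit]
  calc #(univ.filter fun k : Fin n => (k : ℕ) < w) ≤ #(range w) :=
        card_le_card_of_injOn Fin.val (fun k hk => by simpa using hk) Fin.val_injective.injOn
    _ = w := card_range w

theorem cross_count_le_mul :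
    projWt w v * zeroWt v + hamWt v * projZeroWt w v ≤ n * w := by
  calc projWt w v * zeroWt v + hamWt v * projZeroWt w v
      ≤ (hamWt v + zeroWt v) * (projWt w v + projZeroWt w v) := by nlinarith
    _ ≤ n * w := by
        rw [hamWt_add_zeroWt]
        exact Nat.mul_le_mul_left n (projWt_add_projZeroWt_le w v)

theorem cross_count_eq_zero_of_const (hv : ∀ i j, v i = v j) :
    projWt w v * zeroWt v + hamWt v * projZeroWt w v = 0 := by
  by_cases h : ∀ k, v k = 0
  · simp [projWt, hamWt, h]
  · obtain ⟨k, hk⟩ := not_forall.1 h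
    have hne : ∀ j, v j ≠ 0 := fun j => hv j k ▸ hk
    simp [zeroWt, projZeroWt, hne]

theorem eq_zero_of_hamWt_eq_zero (h : hamWt v = 0) : v = 0 := by
  ext k
  simpa using filter_eq_empty_iff.1 (card_eq_zero.1 h) (mem_univ k)

end Weights

theorem apply_eq_apply_zero_of_coBd_eq_zero {L : ℕ} {s : Fin L → ZMod 2} (h : coBd L s = 0) :
    ∀ (k : ℕ) (hk : k < L), s ⟨k, hk⟩ = s ⟨0, by omega⟩
  | 0, _ => rfl
  | k + 1, hk => by
    have hstep : s ⟨k, by omega⟩ + s ⟨k + 1, hk⟩ = 0 := congrFun h ⟨k, by omega⟩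
    rw [← apply_eq_apply_zero_of_coBd_eq_zero h k (by omega)]
    exact (CharTwo.add_eq_zero.1 hstep).symm

theorem apply_eq_apply_of_coBd_eq_zero {L : ℕ} {s : Fin L → ZMod 2} (h : coBd L s = 0) (i j : Fin L) :
    s i = s j := by
  have hi := apply_eq_apply_zero_of_coBd_eq_zero h i i.2
  have hj := apply_eq_apply_zero_of_coBd_eq_zero h j j.2
  exact hi.trans hj.symm

theorem cross_count_le_mul_hamWt_coBd (L w : ℕ) (s : Fin L → ZMod 2) :
    projWt w s * zeroWt s + hamWt s * projZeroWt w s ≤ L * w * hamWt (coBd L s) := by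
  rcases Nat.eq_zero_or_pos (hamWt (coBd L s)) with h | h
  · have hconst := apply_eq_apply_of_coBd_eq_zero (eq_zero_of_hamWt_eq_zero _ h)
    rw [cross_count_eq_zero_of_const w s hconst]
    exact Nat.zero_le _
  · exact (cross_count_le_mul w s).trans (Nat.le_mul_of_pos_right _ h)

theorem repetition_code_relative_coexpanding_general (L w : ℕ)
    (s : Fin L → ZMod 2) :
    (1 / ((L : ℚ) * (w : ℚ))) *
        ((projWt w s : ℚ) * (zeroWt s : ℚ) + (hamWt s : ℚ) * (projZeroWt w s : ℚ)) ≤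
      (hamWt (coBd L s) : ℚ) := by
  rw [one_div_mul_eq_div]
  refine div_le_of_le_mul₀ (by positivity) (by positivity) ?_
  exact_mod_cast (cross_count_le_mul_hamWt_coBd L w s).trans_eq (mul_comm _ _)

/-- The repetition code is `(1/L)`-coexpanding relative to the projection `π`
onto the first `w` coordinates:
`|δ s| ≥ (1/(L·w)) · (|π s| |s̄| + |s| |π s̄|)`. -/
theorem repetition_code_relative_coexpanding (L w : ℕ) (hw : 1 ≤ w) (hwL : w ≤ L)
    (s : Fin L → ZMod 2) :
    (1 / ((L : ℚ) * (w : ℚ))) *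
        ((projWt w s : ℚ) * (zeroWt s : ℚ) + (hamWt s : ℚ) * (projZeroWt w s : ℚ)) ≤
      (hamWt (coBd L s) : ℚ) :=
  repetition_code_relative_coexpanding_general L w s
end

section
/- Let G₁ = (V₁, E₁) and G₂ = (V₂, E₂) be finite graphs whose coboundary maps are a-coexpanding and b-coexpanding respectively. Then the Cartesian product graph G₁ □ G₂ (with vertex set V₁ × V₂ and edges joining (x,y)-(x',y) for xx' ∈ E₁ and (x,y)-(x,y') for yy' ∈ E₂) is min(a,b)-coexpanding. -/
/-!
For `s ⊆ V₁ × V₂` write `s_y = {x | (x, y) ∈ s}` (rows) and `sˣ = {y | (x, y) ∈ s}` (columns).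
The edge boundary of `s` in `G₁ □ G₂` is the disjoint union of the boundaries of the rows in `G₁`
and of the columns in `G₂`. On the other side, for `p = (x, y) ∈ s` and `q = (x', y') ∉ s` the corner
`(x', y)` is either outside `s`, giving a separated pair in the row `y`, or inside `s`, giving one in
the column `x'`; hence `|s| |s̄| ≤ |V₂| ∑_y |s_y| |s̄_y| + |V₁| ∑_x |sˣ| |s̄ˣ|`. Lowering both
constants to `min a b`, applying the hypotheses to every row and column and dividing by `|V₁| |V₂|`
gives the claim.
-/

open scoped Classical in
/-- The set of edges of `G` with exactly one endpoint in `s`. -/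
noncomputable def edgeBoundary {V : Type*} [Fintype V] (G : SimpleGraph V) (s : Finset V) :
    Finset (Sym2 V) :=
  G.edgeFinset.filter (fun e => ∃ a b, e = Sym2.mk a b ∧ a ∈ s ∧ b ∉ s)

open scoped Classical in
/-- `G` is `c`-coexpanding: `|δ s| ≥ (2c/|V|) |s| |s̄|` for all vertex subsets `s`. -/
def Coexpanding {V : Type*} [Fintype V] (G : SimpleGraph V) (c : ℚ) : Prop :=
  ∀ s : Finset V,
    (2 * c / (Fintype.card V : ℚ)) * (s.card : ℚ) * (sᶜ.card : ℚ) ≤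
      ((edgeBoundary G s).card : ℚ)

open Finset

section Counting

variable {V : Type*} [Fintype V] [DecidableEq V]

theorem card_mul_card_compl_eq_sum (t : Finset V) :
    #t * #tᶜ = ∑ a, ∑ b, if a ∈ t ∧ b ∉ t then 1 else 0 := by
  rw [← card_product, ← Fintype.sum_prod_type', ← card_filter]
  congr 1
  ext
  simp

theorem card_edgeBoundary_eq_sum (G : SimpleGraph V) [DecidableRel G.Adj] (t : Finset V) :
    #(edgeBoundary G t) = ∑ a, ∑ b, if G.Adj a b ∧ a ∈ t ∧ b ∉ t then 1 else 0 := by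
  rw [← Fintype.sum_prod_type', ← card_filter]
  symm
  refine card_bij (fun p _ => s(p.1, p.2)) ?_ ?_ ?_
  · rintro ⟨a, b⟩ h
    simp only [mem_filter, mem_univ, true_and] at h
    simp only [edgeBoundary, mem_filter, SimpleGraph.mem_edgeFinset, SimpleGraph.mem_edgeSet]
    exact ⟨h.1, a, b, rfl, h.2⟩
  · rintro ⟨a, b⟩ h ⟨a', b'⟩ h' he
    simp only [mem_filter, mem_univ, true_and] at h h'
    rcases Sym2.eq_iff.mp he with ⟨rfl, rfl⟩ | ⟨rfl, rfl⟩
    · rfl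
    · exact absurd h.2.1 h'.2.2
  · intro e he
    simp only [edgeBoundary, mem_filter, SimpleGraph.mem_edgeFinset] at he
    obtain ⟨hG, a, b, rfl, ha, hb⟩ := he
    exact ⟨(a, b), by simpa using ⟨hG, ha, hb⟩, rfl⟩

end Counting

section Slices

variable {α β : Type*} [DecidableEq α] [DecidableEq β]

def rowSlice [Fintype α] (s : Finset (α × β)) (y : β) : Finset α := {x | (x, y) ∈ s}

def colSlice [Fintype β] (s : Finset (α × β)) (x : α) : Finset β := {y | (x, y) ∈ s}

@[simp]
theorem mem_rowSlice [Fintype α] {s : Finset (α × β)} {x : α} {y : β} :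
    x ∈ rowSlice s y ↔ (x, y) ∈ s := by
  simp [rowSlice]

@[simp]
theorem mem_colSlice [Fintype β] {s : Finset (α × β)} {x : α} {y : β} :
    y ∈ colSlice s x ↔ (x, y) ∈ s := by
  simp [colSlice]

variable [Fintype α] [Fintype β]

theorem card_edgeBoundary_boxProd (G₁ : SimpleGraph α) (G₂ : SimpleGraph β)
    (s : Finset (α × β)) :
    #(edgeBoundary (G₁ □ G₂) s) =
      ∑ y, #(edgeBoundary G₁ (rowSlice s y)) + ∑ x, #(edgeBoundary G₂ (colSlice s x)) := by
  classical
  have split_adj : ∀ x x' y y',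
      (if (G₁ □ G₂).Adj (x, y) (x', y') ∧ (x, y) ∈ s ∧ (x', y') ∉ s then 1 else 0) =
        (if y = y' then if G₁.Adj x x' ∧ (x, y) ∈ s ∧ (x', y) ∉ s then 1 else 0 else 0) +
          (if x = x' then if G₂.Adj y y' ∧ (x, y) ∈ s ∧ (x, y') ∉ s then 1 else 0 else 0) := by
    intro x x' y y'
    by_cases hx : x = x' <;> by_cases hy : y = y' <;> subst_vars <;> simp [*]
  simp only [card_edgeBoundary_eq_sum, Fintype.sum_prod_type, split_adj, sum_add_distrib,
    mem_rowSlice, mem_colSlice, sum_ite_irrel, sum_const_zero, sum_ite_eq, mem_univ, if_true]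
  rw [sum_comm]

theorem card_mul_card_compl_le_sum_slices (s : Finset (α × β)) :
    #s * #sᶜ ≤ Fintype.card β * ∑ y, #(rowSlice s y) * #(rowSlice s y)ᶜ +
      Fintype.card α * ∑ x, #(colSlice s x) * #(colSlice s x)ᶜ := by
  simp only [card_mul_card_compl_eq_sum, Fintype.sum_prod_type, mem_rowSlice, mem_colSlice]
  calc _ ≤ ∑ x, ∑ y, ∑ x', ∑ y' : β, ((if (x, y) ∈ s ∧ (x', y) ∉ s then 1 else 0) +
          if (x', y) ∈ s ∧ (x', y') ∉ s then 1 else 0) := by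
        gcongr with x _ y _ x' _ y' _
        split_ifs <;> simp_all
    _ = _ := by
        simp only [sum_add_distrib, sum_const, card_univ, smul_eq_mul, mul_sum]
        rw [sum_comm]
        exact congrArg _ sum_comm

theorem cast_card_mul_card_compl_div_le (s : Finset (α × β)) :
    (#s * #sᶜ : ℚ) / Fintype.card (α × β) ≤
      (∑ y, #(rowSlice s y) * #(rowSlice s y)ᶜ : ℚ) / Fintype.card α +
        (∑ x, #(colSlice s x) * #(colSlice s x)ᶜ : ℚ) / Fintype.card β := by
  rcases (Fintype.card α).eq_zero_or_pos with hα | hα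
  · simp only [Fintype.card_prod, hα, zero_mul, Nat.cast_zero, div_zero, zero_add]
    positivity
  rcases (Fintype.card β).eq_zero_or_pos with hβ | hβ
  · simp only [Fintype.card_prod, hβ, mul_zero, Nat.cast_zero, div_zero, add_zero]
    positivity
  rw [Fintype.card_prod, Nat.cast_mul, div_le_iff₀ (by positivity)]
  calc (#s * #sᶜ : ℚ)
      ≤ Fintype.card β * ∑ y, (#(rowSlice s y) * #(rowSlice s y)ᶜ : ℚ) +
          Fintype.card α * ∑ x, (#(colSlice s x) * #(colSlice s x)ᶜ : ℚ) := by
        exact_mod_cast card_mul_card_compl_le_sum_slices s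
    _ = _ := by field_simp

end Slices

section Coexpanding

variable {V : Type*} [Fintype V]

theorem coexpanding_zero (G : SimpleGraph V) : Coexpanding G 0 := fun s => by simp

theorem Coexpanding.mono {G : SimpleGraph V} {a c : ℚ} (h : Coexpanding G a) (hca : c ≤ a) :
    Coexpanding G c :=
  fun s => le_trans (by gcongr) (h s)

theorem Coexpanding.boxProd {α β : Type*} [Fintype α] [Fintype β] {G₁ : SimpleGraph α}
    {G₂ : SimpleGraph β} {c : ℚ} (h₁ : Coexpanding G₁ c) (h₂ : Coexpanding G₂ c) :
    Coexpanding (G₁ □ G₂) c := by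
  classical
  intro s
  rcases le_or_gt c 0 with hc | hc
  · exact (coexpanding_zero _).mono hc s
  have hcut := cast_card_mul_card_compl_div_le s
  -- `Coexpanding` forms `sᶜ` with a classical `DecidableEq (α × β)`, not the product instance
  rw [card_compl s] at hcut
  simp only [card_compl]
  calc 2 * c / (Fintype.card (α × β) : ℚ) * #s * ((Fintype.card (α × β) - #s : ℕ) : ℚ)
      = 2 * c * (#s * ((Fintype.card (α × β) - #s : ℕ) : ℚ) / Fintype.card (α × β)) := by ring
    _ ≤ 2 * c * ((∑ y, #(rowSlice s y) * #(rowSlice s y)ᶜ : ℚ) / Fintype.card α +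
          (∑ x, #(colSlice s x) * #(colSlice s x)ᶜ : ℚ) / Fintype.card β) := by gcongr
    _ = ∑ y, 2 * c / Fintype.card α * #(rowSlice s y) * #(rowSlice s y)ᶜ +
          ∑ x, 2 * c / Fintype.card β * #(colSlice s x) * #(colSlice s x)ᶜ := by
        simp only [mul_add, sum_div, mul_sum]
        congr 1 <;> exact sum_congr rfl fun _ _ => by ring
    _ ≤ ∑ y, (#(edgeBoundary G₁ (rowSlice s y)) : ℚ) +
          ∑ x, (#(edgeBoundary G₂ (colSlice s x)) : ℚ) := by
        gcongr with y _ x _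
        exacts [h₁ _, h₂ _]
    _ = #(edgeBoundary (G₁ □ G₂) s) := by
        rw [card_edgeBoundary_boxProd]
        push_cast
        rfl

end Coexpanding

/-- If `G₁` is `a`-coexpanding and `G₂` is `b`-coexpanding, then the Cartesian
(box) product `G₁ □ G₂` is `min(a,b)`-coexpanding. -/
theorem boxProd_coexpanding {V₁ V₂ : Type*} [Fintype V₁] [Fintype V₂]
    (G₁ : SimpleGraph V₁) (G₂ : SimpleGraph V₂) (a b : ℚ)
    (h₁ : Coexpanding G₁ a) (h₂ : Coexpanding G₂ b) :
    Coexpanding (G₁ □ G₂) (min a b) :=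
  (h₁.mono (min_le_left a b)).boxProd (h₂.mono (min_le_right a b))
end

section
/- Let G₁ be a finite graph on vertex set V₁ that is a-coexpanding and a^π-coexpanding relative to a projection π¹ onto a w-element subset W ⊆ V₁, and let G₂ be a finite graph on V₂ that is b-coexpanding. Then the Cartesian product G₁ □ G₂ is min(a^π, b)-coexpanding relative to the projection onto W × V₂. -/
open scoped Classical in
/-- `G` is `c`-coexpanding relative to the projection onto `Vπ`:
`|δ s| ≥ (c/|Vπ|)(|π s| |s̄| + |s| |π s̄|)` for all vertex subsets `s`. -/
def RelCoexpanding {V : Type*} [Fintype V] (G : SimpleGraph V) (Vπ : Finset V) (c : ℚ) :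
    Prop :=
  ∀ s : Finset V,
    (c / (Vπ.card : ℚ)) *
        (((s ∩ Vπ).card : ℚ) * (sᶜ.card : ℚ) + (s.card : ℚ) * ((sᶜ ∩ Vπ).card : ℚ)) ≤
      ((edgeBoundary G s).card : ℚ)

/-!
Cut `s ⊆ V₁ × V₂` into rows `s_y ⊆ V₁` and columns `sˣ ⊆ V₂`. Every edge of `G₁ □ G₂` lies
in a row or a column, so `|δ s| = ∑_y |δ s_y| + ∑_x |δ sˣ|`.
Put `P(t, t') = |π t| |t̄'| + |t| |π t̄'|`; by bilinearity
`|π s| |s̄| + |s| |π s̄| = ∑_{y,y'} P(s_y, s_y')`. Now `P(t, t') + P(t', t)` exceeds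
`P(t, t) + P(t', t')` by at most `2 |W| (|t \ t'| + |t' \ t|)`, and
`∑_{y,y'} |s_y \ s_y'| = ∑_x |sˣ| |s̄ˣ|`. Hence `|π s| |s̄| + |s| |π s̄|` is at most
`|V₂| ∑_y P(s_y, s_y) + 2 |W| ∑_x |sˣ| |s̄ˣ|`, and the two sums are bounded by the relative
coexpansion of `G₁` on the rows and the coexpansion of `G₂` on the columns.
-/

open Finset SimpleGraph

section Slices

variable {α β : Type*}

noncomputable def prodRow (s : Finset (α × β)) (b : β) : Finset α :=
  s.preimage (·, b) (Prod.mk_left_injective b).injOn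

noncomputable def prodCol (s : Finset (α × β)) (a : α) : Finset β :=
  s.preimage (a, ·) (Prod.mk_right_injective a).injOn

@[simp]
lemma mem_prodRow {s : Finset (α × β)} {a : α} {b : β} : a ∈ prodRow s b ↔ (a, b) ∈ s :=
  mem_preimage

@[simp]
lemma mem_prodCol {s : Finset (α × β)} {a : α} {b : β} : b ∈ prodCol s a ↔ (a, b) ∈ s :=
  mem_preimage

lemma prodRow_compl [Fintype α] [Fintype β] [DecidableEq α] [DecidableEq β]
    (s : Finset (α × β)) (b : β) : prodRow sᶜ b = (prodRow s b)ᶜ := by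
  ext; simp

lemma prodCol_compl [Fintype α] [Fintype β] [DecidableEq α] [DecidableEq β]
    (s : Finset (α × β)) (a : α) : prodCol sᶜ a = (prodCol s a)ᶜ := by
  ext; simp

lemma prodRow_inter_product_univ [Fintype β] [DecidableEq α] [DecidableEq β]
    (s : Finset (α × β)) (W : Finset α) (b : β) :
    prodRow (s ∩ W ×ˢ univ) b = prodRow s b ∩ W := by
  ext; simp

lemma card_eq_sum_card_prodRow [Fintype β] [DecidableEq β] (s : Finset (α × β)) :
    #s = ∑ b, #(prodRow s b) := by
  rw [card_eq_sum_card_fiberwise (f := Prod.snd) (t := univ) fun _ _ => mem_univ _]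
  refine sum_congr rfl fun b _ => card_nbij' Prod.fst (·, b) ?_ ?_ ?_ ?_
  all_goals
    intro p
    aesop

-- Both sides count the triples `(a, b, b')` with `(a, b) ∈ s` and `(a, b') ∉ s`.
lemma sum_card_prodCol_mul_card_compl [Fintype α] [Fintype β] [DecidableEq α] [DecidableEq β]
    (s : Finset (α × β)) :
    ∑ a, #(prodCol s a) * #(prodCol s a)ᶜ = ∑ b, ∑ b', #(prodRow s b \ prodRow s b') := by
  calc ∑ a, #(prodCol s a) * #(prodCol s a)ᶜ
      = ∑ a, ∑ _p ∈ prodCol s a ×ˢ (prodCol s a)ᶜ, 1 := by simp [card_product]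
    _ = ∑ p ∈ univ ×ˢ univ, ∑ _a ∈ prodRow s p.1 \ prodRow s p.2, 1 :=
        sum_comm' fun a p => by simp
    _ = ∑ b, ∑ b', #(prodRow s b \ prodRow s b') := by
        rw [← sum_product']
        simp

end Slices

section BoxProd

variable {α β : Type*} [DecidableEq β] (G : SimpleGraph α) (H : SimpleGraph β)
  [DecidableRel (G □ H).Adj] (s t : Finset (α × β))

lemma card_filter_interedges_boxProd_snd_eq [Fintype β] [DecidableRel G.Adj] :
    #((G □ H).interedges s t |>.filter fun e => e.1.2 = e.2.2) =
      ∑ b, #(G.interedges (prodRow s b) (prodRow t b)) := by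
  rw [← card_sigma]
  refine card_nbij' (fun e => ⟨e.1.2, e.1.1, e.2.1⟩) (fun e => ((e.2.1, e.1), (e.2.2, e.1)))
    ?_ ?_ ?_ ?_
  · rintro ⟨⟨a, b⟩, a', b'⟩
    simp only [coe_filter, Set.mem_ofPred_eq, mem_interedges_iff, boxProd_adj]
    rintro ⟨⟨hs, ht, ⟨hadj, -⟩ | ⟨hadj, -⟩⟩, rfl⟩
    · simp [mem_interedges_iff, hs, ht, hadj]
    · exact absurd hadj (H.loopless.irrefl b)
  · rintro ⟨b, a, a'⟩
    simp [mem_interedges_iff]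
  · rintro ⟨⟨a, b⟩, a', b'⟩
    simp +contextual
  · rintro ⟨b, a, a'⟩
    simp

lemma card_filter_interedges_boxProd_snd_ne [Fintype α] [DecidableEq α] [DecidableRel H.Adj] :
    #((G □ H).interedges s t |>.filter fun e => e.1.2 ≠ e.2.2) =
      ∑ a, #(H.interedges (prodCol s a) (prodCol t a)) := by
  rw [← card_sigma]
  refine card_nbij' (fun e => ⟨e.1.1, e.1.2, e.2.2⟩) (fun e => ((e.1, e.2.1), (e.1, e.2.2)))
    ?_ ?_ ?_ ?_
  · rintro ⟨⟨a, b⟩, a', b'⟩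
    simp only [coe_filter, Set.mem_ofPred_eq, mem_interedges_iff, boxProd_adj]
    rintro ⟨⟨hs, ht, ⟨-, hb⟩ | ⟨hadj, rfl⟩⟩, hne⟩
    · exact absurd hb hne
    · simp [mem_interedges_iff, hs, ht, hadj]
  · rintro ⟨a, b, b'⟩
    simp +contextual [mem_interedges_iff, H.ne_of_adj]
  · rintro ⟨⟨a, b⟩, a', b'⟩
    simp only [coe_filter, Set.mem_ofPred_eq, mem_interedges_iff, boxProd_adj]
    rintro ⟨⟨-, -, ⟨-, hb⟩ | ⟨-, rfl⟩⟩, hne⟩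
    · exact absurd hb hne
    · rfl
  · rintro ⟨a, b, b'⟩
    simp

lemma card_interedges_boxProd [Fintype α] [Fintype β] [DecidableEq α] [DecidableRel G.Adj]
    [DecidableRel H.Adj] :
    #((G □ H).interedges s t) =
      ∑ b, #(G.interedges (prodRow s b) (prodRow t b)) +
        ∑ a, #(H.interedges (prodCol s a) (prodCol t a)) := by
  rw [← card_filter_interedges_boxProd_snd_eq G H, ← card_filter_interedges_boxProd_snd_ne G H,
    card_filter_add_card_filter_not]

end BoxProd

lemma card_interedges_compl_eq_card_edgeBoundary {V : Type*} [Fintype V] [DecidableEq V]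
    (G : SimpleGraph V) [DecidableRel G.Adj] (s : Finset V) :
    #(G.interedges s sᶜ) = #(edgeBoundary G s) := by
  refine card_bij (fun e _ => s(e.1, e.2)) ?_ ?_ ?_
  · rintro ⟨a, b⟩ he
    rw [mk_mem_interedges_iff, mem_compl] at he
    simp only [edgeBoundary, mem_filter, mem_edgeFinset, mem_edgeSet]
    exact ⟨he.2.2, a, b, rfl, he.1, he.2.1⟩
  · rintro ⟨a, b⟩ he ⟨a', b'⟩ he' heq
    rw [mk_mem_interedges_iff, mem_compl] at he he'
    rcases Sym2.eq_iff.1 heq with ⟨rfl, rfl⟩ | ⟨rfl, rfl⟩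
    · rfl
    · exact absurd he.1 he'.2.1
  · intro e he
    simp only [edgeBoundary, mem_filter, mem_edgeFinset] at he
    obtain ⟨hadj, a, b, rfl, ha, hb⟩ := he
    exact ⟨(a, b), by simpa [mk_mem_interedges_iff, ha, hb] using hadj, rfl⟩

lemma card_edgeBoundary_boxProd_s7 {α β : Type*} [Fintype α] [Fintype β]
    (G : SimpleGraph α) (H : SimpleGraph β) (s : Finset (α × β)) :
    #(edgeBoundary (G □ H) s) =
      ∑ b, #(edgeBoundary G (prodRow s b)) + ∑ a, #(edgeBoundary H (prodCol s a)) := by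
  classical
  simp only [← card_interedges_compl_eq_card_edgeBoundary, card_interedges_boxProd,
    prodRow_compl, prodCol_compl]

lemma sum_sum_le_of_add_swap_le {ι K : Type*} [Fintype ι] [Field K] [LinearOrder K]
    [IsStrictOrderedRing K] {f k : ι → ι → K} {g : ι → K}
    (h : ∀ i j, f i j + f j i ≤ g i + g j + (k i j + k j i)) :
    ∑ i, ∑ j, f i j ≤ Fintype.card ι * ∑ i, g i + ∑ i, ∑ j, k i j := by
  have hsum := sum_le_sum fun i (_ : i ∈ univ) => sum_le_sum fun j (_ : j ∈ univ) => h i j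
  simp only [sum_add_distrib, sum_const, card_univ, nsmul_eq_mul] at hsum
  rw [sum_comm (f := fun i j => f j i), sum_comm (f := fun i j => k j i), ← mul_sum] at hsum
  linarith

section ProjCross

variable {V : Type*} [Fintype V] [DecidableEq V]

def projCross (W t t' : Finset V) : ℚ := #(t ∩ W) * #t'ᶜ + #t * #(t'ᶜ ∩ W)

lemma projCross_nonneg (W t t' : Finset V) : 0 ≤ projCross W t t' := by
  unfold projCross; positivity

-- The definitions use classical decidability; these restatements accept any `DecidableEq` instance.
lemma relCoexpanding_iff (G : SimpleGraph V) (W : Finset V) (c : ℚ) :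
    RelCoexpanding G W c ↔ ∀ s, c / #W * projCross W s s ≤ #(edgeBoundary G s) := by
  unfold RelCoexpanding projCross
  congr!

lemma Coexpanding.le {G : SimpleGraph V} {c : ℚ} (h : Coexpanding G c) (s : Finset V) :
    2 * c / Fintype.card V * #s * #sᶜ ≤ (#(edgeBoundary G s) : ℚ) := by
  convert h s

lemma projCross_add_projCross_le (W t t' : Finset V) :
    projCross W t t' + projCross W t' t ≤
      projCross W t t + projCross W t' t' + (2 * #W * #(t \ t') + 2 * #W * #(t' \ t)) := by
  have hcompl : ∀ u : Finset V, (#uᶜ : ℚ) = Fintype.card V - #u := fun u => by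
    rw [card_compl, Nat.cast_sub (card_le_univ u)]
  have hW : ∀ u : Finset V, (#(uᶜ ∩ W) : ℚ) = #W - #(u ∩ W) := fun u => by
    rw [eq_sub_iff_add_eq, inter_comm, ← sdiff_eq_inter_compl, inter_comm u, ← Nat.cast_add,
      card_sdiff_add_card_inter]
  have hsplit : ∀ u u' : Finset V, (#u : ℚ) = #(u ∩ u') + #(u \ u') := fun u u' => by
    rw [← Nat.cast_add, card_inter_add_card_sdiff]
  have hx : (#(t ∩ W) : ℚ) ≤ #W := mod_cast card_le_card inter_subset_right
  have hx' : (#(t' ∩ W) : ℚ) ≤ #W := mod_cast card_le_card inter_subset_right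
  have hy := hsplit t t'
  have hy' := hsplit t' t
  rw [inter_comm t' t] at hy'
  simp only [projCross, hcompl, hW]
  -- The left side exceeds the first two terms on the right by
  -- `2 (#(t ∩ W) - #(t' ∩ W)) (#t - #t')`, whose first factor lies in `[-#W, #W]`,
  -- while `|#t - #t'| ≤ #(t \ t') + #(t' \ t)`.
  nlinarith [mul_nonneg (sub_nonneg.2 hx) (Nat.cast_nonneg (α := ℚ) #(t \ t')),
    mul_nonneg (sub_nonneg.2 hx') (Nat.cast_nonneg (α := ℚ) #(t' \ t))]

end ProjCross

section ProjCrossProduct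

variable {α β : Type*} [Fintype α] [Fintype β] [DecidableEq α] [DecidableEq β]

lemma projCross_product_univ (W : Finset α) (s : Finset (α × β)) :
    projCross (W ×ˢ univ) s s = ∑ b, ∑ b', projCross W (prodRow s b) (prodRow s b') := by
  have hrows : ∀ u : Finset (α × β), (#u : ℚ) = ∑ b, (#(prodRow u b) : ℚ) := fun u => by
    exact_mod_cast card_eq_sum_card_prodRow u
  simp only [projCross, hrows (s ∩ _), hrows sᶜ, hrows s, hrows (sᶜ ∩ _),
    prodRow_inter_product_univ, prodRow_compl, sum_mul_sum, ← sum_add_distrib]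

lemma projCross_product_univ_le (W : Finset α) (s : Finset (α × β)) :
    projCross (W ×ˢ univ) s s ≤
      Fintype.card β * ∑ b, projCross W (prodRow s b) (prodRow s b) +
        2 * #W * ∑ a, (#(prodCol s a) * #(prodCol s a)ᶜ : ℚ) := by
  rw [projCross_product_univ]
  refine (sum_sum_le_of_add_swap_le (g := fun b => projCross W (prodRow s b) (prodRow s b))
    (k := fun b b' => 2 * #W * (#(prodRow s b \ prodRow s b') : ℚ))
    fun b b' => projCross_add_projCross_le W _ _).trans_eq ?_
  simp only [← mul_sum]
  congr 2
  exact_mod_cast (sum_card_prodCol_mul_card_compl s).symm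

lemma div_card_mul_projCross_product_univ_le {c : ℚ} (hc : 0 ≤ c) (W : Finset α)
    (s : Finset (α × β)) :
    c / #(W ×ˢ (univ : Finset β)) * projCross (W ×ˢ univ) s s ≤
      ∑ b, c / #W * projCross W (prodRow s b) (prodRow s b) +
        ∑ a, 2 * c / Fintype.card β * #(prodCol s a) * #(prodCol s a)ᶜ := by
  have hrhs : 0 ≤ ∑ b, c / #W * projCross W (prodRow s b) (prodRow s b) +
      ∑ a, 2 * c / Fintype.card β * #(prodCol s a) * #(prodCol s a)ᶜ :=
    add_nonneg (sum_nonneg fun b _ => mul_nonneg (by positivity) (projCross_nonneg _ _ _))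
      (by positivity)
  obtain hWβ | hWβ := (#(W ×ˢ (univ : Finset β))).eq_zero_or_pos
  · simpa [hWβ] using hrhs
  rw [card_product, card_univ] at hWβ ⊢
  have hW : (0 : ℚ) < #W := mod_cast pos_of_mul_pos_left hWβ (Nat.zero_le _)
  have hβ : (0 : ℚ) < Fintype.card β := mod_cast pos_of_mul_pos_right hWβ (Nat.zero_le _)
  calc c / ↑(#W * Fintype.card β) * projCross (W ×ˢ univ) s s
      ≤ c / (#W * Fintype.card β) * (Fintype.card β * ∑ b, projCross W (prodRow s b) (prodRow s b)
          + 2 * #W * ∑ a, (#(prodCol s a) * #(prodCol s a)ᶜ : ℚ)) := by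
        push_cast
        gcongr
        exact projCross_product_univ_le W s
    _ = _ := by
        simp only [mul_add, mul_sum]
        congr 1 <;> refine sum_congr rfl fun _ _ => ?_ <;> field_simp

end ProjCrossProduct

theorem boxProd_relCoexpanding_general {V₁ V₂ : Type*} [Fintype V₁] [Fintype V₂]
    (G₁ : SimpleGraph V₁) (G₂ : SimpleGraph V₂) (W : Finset V₁) (aπ b : ℚ)
    (h₁π : RelCoexpanding G₁ W aπ) (h₂ : Coexpanding G₂ b) :
    RelCoexpanding (G₁ □ G₂) (W ×ˢ (Finset.univ : Finset V₂)) (min aπ b) := by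
  classical
  rw [relCoexpanding_iff]
  intro s
  obtain hc | hc := le_or_gt (min aπ b) 0
  · exact (mul_nonpos_of_nonpos_of_nonneg (div_nonpos_of_nonpos_of_nonneg hc (by positivity))
      (projCross_nonneg _ _ _)).trans (by positivity)
  calc _ ≤ ∑ y, min aπ b / #W * projCross W (prodRow s y) (prodRow s y) +
          ∑ x, 2 * min aπ b / Fintype.card V₂ * #(prodCol s x) * #(prodCol s x)ᶜ :=
        div_card_mul_projCross_product_univ_le hc.le W s
    _ ≤ ∑ y, aπ / #W * projCross W (prodRow s y) (prodRow s y) +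
          ∑ x, 2 * b / Fintype.card V₂ * #(prodCol s x) * #(prodCol s x)ᶜ := by
        gcongr
        · exact projCross_nonneg _ _ _
        · exact min_le_left _ _
        · exact min_le_right _ _
    _ ≤ ∑ y, (#(edgeBoundary G₁ (prodRow s y)) : ℚ) +
          ∑ x, (#(edgeBoundary G₂ (prodCol s x)) : ℚ) := by
        gcongr with y _ x _
        · exact (relCoexpanding_iff G₁ W aπ).1 h₁π _
        · exact h₂.le _
    _ = #(edgeBoundary (G₁ □ G₂) s) := by
        rw [card_edgeBoundary_boxProd_s7]
        push_cast
        rfl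

/-- If `G₁` is `a`-coexpanding and `aπ`-coexpanding relative to the projection
onto `W ⊆ V₁`, and `G₂` is `b`-coexpanding, then `G₁ □ G₂` is
`min(aπ, b)`-coexpanding relative to the projection onto `W × V₂`. -/
theorem boxProd_relCoexpanding {V₁ V₂ : Type*} [Fintype V₁] [Fintype V₂]
    (G₁ : SimpleGraph V₁) (G₂ : SimpleGraph V₂) (W : Finset V₁) (a aπ b : ℚ)
    (h₁ : Coexpanding G₁ a) (h₁π : RelCoexpanding G₁ W aπ) (h₂ : Coexpanding G₂ b) :
    RelCoexpanding (G₁ □ G₂) (W ×ˢ (Finset.univ : Finset V₂)) (min aπ b) :=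
  boxProd_relCoexpanding_general G₁ G₂ W aπ b h₁π h₂
end

section
/- Consider the product of two repetition codes R(L₁) ⊗ R(L₂), i.e., the grid graph on {1,...,L₁} × {1,...,L₂}, and let π be the projection onto the vertex subset {1,...,w} × {1,...,L₂} for some 1 ≤ w ≤ L₁. Then for any vertex subset s, there exists ŝ ∈ {s, s̄} with δ s = δ ŝ such that |δ s| ≥ min(1, 2L₁/L₂) · (1/w) · |π ŝ|. -/
open SimpleGraph

/-! Rows of the grid are copies of the connected path on `Fin L₁` and columns copies of the
path on `Fin L₂`, so every row or column meeting both `s` and `sᶜ` carries a boundary edge of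
`s`, different lines giving different edges. If no row lies inside `s`, every row met by `π s`
crosses, whence `|π s| ≤ w |δ s|`; if no row avoids `s`, the same holds for `sᶜ`. Otherwise
there is a full row and an empty row, so all `L₁` columns cross and `|δ s| ≥ L₁`, while the
smaller of `π s` and `π sᶜ` has at most `w L₂ / 2` points. -/

open Finset

section EdgeBoundary

variable {V : Type*} [Fintype V] {G : SimpleGraph V} {s : Finset V}

theorem mem_edgeBoundary {e : Sym2 V} :
    e ∈ edgeBoundary G s ↔ e ∈ G.edgeSet ∧ ∃ a b, e = s(a, b) ∧ a ∈ s ∧ b ∉ s := by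
  simp only [edgeBoundary, mem_filter, mem_edgeFinset]

theorem mk_mem_edgeBoundary {a b : V} (hab : G.Adj a b) (ha : a ∈ s) (hb : b ∉ s) :
    s(a, b) ∈ edgeBoundary G s :=
  mem_edgeBoundary.2 ⟨hab, a, b, rfl, ha, hb⟩

theorem edgeBoundary_compl [DecidableEq V] (G : SimpleGraph V) (s : Finset V) :
    edgeBoundary G sᶜ = edgeBoundary G s := by
  ext e
  simp only [mem_edgeBoundary, mem_compl, not_not]
  refine and_congr_right fun _ ↦ ⟨?_, ?_⟩ <;>
    rintro ⟨a, b, rfl, ha, hb⟩ <;> exact ⟨b, a, Sym2.eq_swap, hb, ha⟩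

theorem card_le_card_edgeBoundary_of_fibres {α ι : Type*} {H : SimpleGraph α}
    (hH : H.Preconnected) (f : ι → H →g G) (p : V → ι) (hpf : ∀ j a, p (f j a) = j)
    {T : Finset ι} (hT : ∀ j ∈ T, ∃ a b, f j a ∈ s ∧ f j b ∉ s) :
    #T ≤ #(edgeBoundary G s) := by
  classical
  rw [← card_image_of_injective T Sym2.diag_injective]
  -- `Sym2.map p` sends a crossing edge of the fibre over `j` to `s(j, j)`
  refine card_le_card_of_surjOn (Sym2.map p) ?_
  rw [coe_image]
  rintro _ ⟨j, hj, rfl⟩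
  obtain ⟨a, b, ha, hb⟩ := hT j hj
  obtain ⟨walk⟩ := hH a b
  obtain ⟨d, -, hd, hd'⟩ := walk.exists_boundary_dart (f j ⁻¹' s) ha hb
  refine ⟨s(f j d.fst, f j d.snd), mk_mem_edgeBoundary ((f j).map_adj d.adj) hd hd', ?_⟩
  simp [Sym2.diag, hpf]

end EdgeBoundary

section BoxProd

variable {α β : Type*} [Fintype α] [Fintype β] {G : SimpleGraph α} {H : SimpleGraph β}
  {s : Finset (α × β)}

theorem card_image_snd_le_card_edgeBoundary [DecidableEq β] (hG : G.Preconnected)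
    (h : ∀ j, ∃ i, (i, j) ∉ s) :
    #(s.image Prod.snd) ≤ #(edgeBoundary (G □ H) s) :=
  card_le_card_edgeBoundary_of_fibres hG (fun j ↦ (boxProdLeft G H j).toHom) Prod.snd
    (fun _ _ ↦ rfl) fun j hj ↦ by
      obtain ⟨x, hx, rfl⟩ := mem_image.1 hj
      obtain ⟨i, hi⟩ := h x.2
      exact ⟨x.1, i, hx, hi⟩

theorem card_le_card_edgeBoundary_of_full_of_empty (hH : H.Preconnected) {j₁ j₂ : β}
    (hfull : ∀ i, (i, j₁) ∈ s) (hempty : ∀ i, (i, j₂) ∉ s) :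
    Fintype.card α ≤ #(edgeBoundary (G □ H) s) :=
  card_le_card_edgeBoundary_of_fibres hH (fun i ↦ (boxProdRight G H i).toHom) Prod.fst
    (fun _ _ ↦ rfl) (T := univ) fun i _ ↦ ⟨j₁, j₂, hfull i, hempty i⟩

end BoxProd

section Projection

variable {β : Type*} [DecidableEq β] {n w : ℕ}

theorem card_filter_fst_lt_le (s : Finset (Fin n × β)) :
    #(s.filter fun p ↦ (p.1 : ℕ) < w) ≤ w * #(s.image Prod.snd) := by
  refine card_le_mul_card_image_of_maps_to
    (fun p hp ↦ mem_image_of_mem Prod.snd (mem_filter.1 hp).1) w fun j _ ↦ ?_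
  calc _ ≤ #(range w) := card_le_card_of_injOn (fun p ↦ (p.1 : ℕ))
          (fun p hp ↦ by simp only [coe_filter, mem_filter] at hp; simpa using hp.1.2)
          (fun p hp q hq hpq ↦ by
            simp only [coe_filter, mem_filter] at hp hq
            exact Prod.ext (Fin.ext hpq) (hp.2.trans hq.2.symm))
    _ = w := card_range w

theorem card_filter_fst_lt_le_mul_card_edgeBoundary [Fintype β] {G : SimpleGraph (Fin n)}
    {H : SimpleGraph β} (hG : G.Preconnected) {s : Finset (Fin n × β)}
    (h : ∀ j, ∃ i, (i, j) ∉ s) :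
    #(s.filter fun p ↦ (p.1 : ℕ) < w) ≤ w * #(edgeBoundary (G □ H) s) :=
  (card_filter_fst_lt_le s).trans <|
    Nat.mul_le_mul_left w (card_image_snd_le_card_edgeBoundary hG h)

theorem card_filter_fst_lt_add_card_filter_compl_le [Fintype β]
    (s : Finset (Fin n × β)) :
    #(s.filter fun p ↦ (p.1 : ℕ) < w) + #(sᶜ.filter fun p ↦ (p.1 : ℕ) < w) ≤
      w * Fintype.card β := by
  rw [← card_union_of_disjoint (disjoint_filter_filter disjoint_compl_right), ← filter_union,
    union_compl]
  exact (card_filter_fst_lt_le univ).trans (Nat.mul_le_mul_left w (card_le_univ _))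

end Projection

theorem min_one_mul_one_div_mul_le {m : ℚ} {w c B : ℕ} (h : c ≤ w * B) :
    min 1 m * (1 / (w : ℚ)) * c ≤ B :=
  calc min 1 m * (1 / (w : ℚ)) * c ≤ 1 * (1 / (w : ℚ)) * c := by gcongr; exact min_le_left _ _
    _ = c / w := by ring
    _ ≤ B := div_le_of_le_mul₀ (by positivity) (by positivity) <| by
      rw [mul_comm]; exact_mod_cast h

theorem min_one_two_mul_div_mul_one_div_mul_le {L₁ L₂ w c B : ℕ} (hc : 2 * c ≤ w * L₂)
    (hB : L₁ ≤ B) : min 1 (2 * (L₁ : ℚ) / L₂) * (1 / (w : ℚ)) * c ≤ B :=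
  calc min 1 (2 * (L₁ : ℚ) / L₂) * (1 / (w : ℚ)) * c
      ≤ 2 * (L₁ : ℚ) / L₂ * (1 / (w : ℚ)) * c := by gcongr; exact min_le_right _ _
    _ = L₁ * (2 * c / (w * L₂)) := by ring
    _ ≤ L₁ * 1 := by
      gcongr
      exact div_le_one_of_le₀ (by exact_mod_cast hc) (by positivity)
    _ ≤ B := by rw [mul_one]; exact_mod_cast hB

open scoped Classical in
theorem grid_relative_expansion_general (L₁ L₂ w : ℕ)
    (s : Finset (Fin L₁ × Fin L₂)) :
    ∃ t : Finset (Fin L₁ × Fin L₂), (t = s ∨ t = sᶜ) ∧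
      edgeBoundary (pathGraph L₁ □ pathGraph L₂) t =
        edgeBoundary (pathGraph L₁ □ pathGraph L₂) s ∧
      min 1 (2 * (L₁ : ℚ) / (L₂ : ℚ)) * (1 / (w : ℚ)) *
          (((t.filter (fun p => (p.1 : ℕ) < w)).card : ℚ)) ≤
        ((edgeBoundary (pathGraph L₁ □ pathGraph L₂) s).card : ℚ) := by
  by_cases hfull : ∃ j, ∀ i, (i, j) ∈ s
  swap
  · push Not at hfull
    exact ⟨s, .inl rfl, rfl, min_one_mul_one_div_mul_le
      (card_filter_fst_lt_le_mul_card_edgeBoundary (pathGraph_preconnected L₁) hfull)⟩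
  obtain ⟨j₁, hj₁⟩ := hfull
  by_cases hempty : ∃ j, ∀ i, (i, j) ∉ s
  swap
  · push Not at hempty
    refine ⟨sᶜ, .inr rfl, edgeBoundary_compl _ _, ?_⟩
    rw [← edgeBoundary_compl _ s]
    exact min_one_mul_one_div_mul_le (card_filter_fst_lt_le_mul_card_edgeBoundary
      (pathGraph_preconnected L₁) (by simpa using hempty))
  obtain ⟨j₂, hj₂⟩ := hempty
  -- every column now crosses from the full row to the empty one
  have hδ : L₁ ≤ #(edgeBoundary (pathGraph L₁ □ pathGraph L₂) s) := by
    simpa using card_le_card_edgeBoundary_of_full_of_empty (pathGraph_preconnected L₂) hj₁ hj₂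
  have hπ := card_filter_fst_lt_add_card_filter_compl_le (w := w) s
  rw [Fintype.card_fin] at hπ
  rcases le_total #(s.filter fun p ↦ (p.1 : ℕ) < w) #(sᶜ.filter fun p ↦ (p.1 : ℕ) < w)
    with h | h
  · exact ⟨s, .inl rfl, rfl, min_one_two_mul_div_mul_one_div_mul_le (by omega) hδ⟩
  · exact ⟨sᶜ, .inr rfl, edgeBoundary_compl _ _,
      min_one_two_mul_div_mul_one_div_mul_le (by omega) hδ⟩

open scoped Classical in
/-- Relative expansion of the grid graph `R(L₁) ⊗ R(L₂)` (the box product of two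
path graphs), relative to the projection onto `{1,…,w} × {1,…,L₂}`: for every
vertex subset `s` there is `ŝ ∈ {s, s̄}` with `δ ŝ = δ s` and
`|δ s| ≥ min(1, 2L₁/L₂) · (1/w) · |π ŝ|`. -/
theorem grid_relative_expansion (L₁ L₂ w : ℕ) (hw : 1 ≤ w) (hwL : w ≤ L₁)
    (s : Finset (Fin L₁ × Fin L₂)) :
    ∃ t : Finset (Fin L₁ × Fin L₂), (t = s ∨ t = sᶜ) ∧
      edgeBoundary (pathGraph L₁ □ pathGraph L₂) t =
        edgeBoundary (pathGraph L₁ □ pathGraph L₂) s ∧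
      min 1 (2 * (L₁ : ℚ) / (L₂ : ℚ)) * (1 / (w : ℚ)) *
          (((t.filter (fun p => (p.1 : ℕ) < w)).card : ℚ)) ≤
        ((edgeBoundary (pathGraph L₁ □ pathGraph L₂) s).card : ℚ) :=
  grid_relative_expansion_general L₁ L₂ w s
end
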